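/- The manifold M_{6+4p,f} is a (locally) symmetric space, i.e. ∇R = 0, if and only if the function f(z_0,…,z_p) is a polynomial of degree at most 2. -/

import Mathlib

open scoped ContDiff
set_option linter.unusedSectionVars false

section helpers
variable {ι κ : Type*} [Fintype ι] [DecidableEq ι] [Fintype κ] [DecidableEq κ]

/-- coordinate-selection continuous linear map -/
noncomputable def projCLM (e : κ → ι) : (ι → ℝ) →L[ℝ] (κ → ℝ) :=
  ContinuousLinearMap.pi (fun k => ContinuousLinearMap.proj (e k))

@[simp] lemma projCLM_apply (e : κ → ι) (x : ι → ℝ) (k : κ) : projCLM e x k = x (e k) := rfl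

lemma contDiff_pdg {G : (ι → ℝ) → ℝ} (hG : ContDiff ℝ ∞ G) (i : ι) :
    ContDiff ℝ ∞ (fun s => fderiv ℝ G s (Pi.single i 1)) := by
  have h1 : ContDiff ℝ ∞ (fderiv ℝ G) := hG.fderiv_right (le_refl _)
  exact (ContinuousLinearMap.apply ℝ ℝ (Pi.single i 1)).contDiff.comp h1

lemma pd_comp (e : κ → ι) {G : (κ → ℝ) → ℝ} (hG : Differentiable ℝ G) (q : ι → ℝ) (a : ι) :
    fderiv ℝ (fun r => G (projCLM e r)) q (Pi.single a 1)
      = fderiv ℝ G (projCLM e q) (projCLM e (Pi.single a 1)) := by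
  have h := (hG (projCLM e q)).hasFDerivAt.comp q (projCLM e).hasFDerivAt
  have h2 : HasFDerivAt (fun r => G (projCLM e r))
      ((fderiv ℝ G (projCLM e q)).comp (projCLM e)) q := h
  rw [h2.fderiv]; rfl

lemma projCLM_single_mem (e : κ → ι) (he : Function.Injective e) (k : κ) :
    projCLM e (Pi.single (e k) 1) = Pi.single k 1 := by
  funext j
  simp only [projCLM_apply, Pi.single_apply]
  by_cases h : j = k
  · subst h; simp
  · rw [if_neg (fun hh => h (he hh)), if_neg h]

lemma projCLM_single_not_mem (e : κ → ι) (a : ι) (ha : ∀ k, e k ≠ a) :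
    projCLM e (Pi.single a 1) = 0 := by
  funext j
  simp only [projCLM_apply, Pi.single_apply, if_neg (ha j)]; rfl

end helpers

abbrev Idx (n : ℕ) := (Unit ⊕ Fin n) ⊕ (Unit ⊕ Fin n)
abbrev Pt (n : ℕ) := Idx n → ℝ

def iX (n : ℕ) : Idx n := Sum.inl (Sum.inl ())
def iS (n : ℕ) (i : Fin n) : Idx n := Sum.inl (Sum.inr i)

def sPart {n : ℕ} (q : Pt n) : Fin n → ℝ := fun i => q (iS n i)

noncomputable def pd {n : ℕ} (a : Idx n) (h : Pt n → ℝ) (q : Pt n) : ℝ :=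
  fderiv ℝ h q (Pi.single a 1)

noncomputable def pdS {n : ℕ} (i : Fin n) (h : (Fin n → ℝ) → ℝ) (s : Fin n → ℝ) : ℝ :=
  fderiv ℝ h s (Pi.single i 1)

/-- Iterated partial derivatives ∂_{ξ₁}⋯∂_{ξ_r} of a function of `s`. -/
noncomputable def iterPdS {n : ℕ} (L : List (Fin n)) (h : (Fin n → ℝ) → ℝ) :
    (Fin n → ℝ) → ℝ :=
  L.foldr (fun i acc => pdS i acc) h

noncomputable def gmat {n : ℕ} (F : (Fin n → ℝ) → ℝ) (q : Pt n) : Matrix (Idx n) (Idx n) ℝ :=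
  fun a b => match a, b with
    | Sum.inl (Sum.inl _), Sum.inl (Sum.inl _) => -2 * F (sPart q)
    | Sum.inl (Sum.inl _), Sum.inr (Sum.inl _) => 1
    | Sum.inr (Sum.inl _), Sum.inl (Sum.inl _) => 1
    | Sum.inl (Sum.inr i), Sum.inr (Sum.inr j) => if i = j then 1 else 0
    | Sum.inr (Sum.inr i), Sum.inl (Sum.inr j) => if i = j then 1 else 0
    | _, _ => 0

noncomputable def Gamma2 {n : ℕ} (F : (Fin n → ℝ) → ℝ) (l i j : Idx n) (q : Pt n) : ℝ :=
  (1/2) * ∑ m : Idx n, (gmat F q)⁻¹ l m *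
    (pd i (fun r => gmat F r j m) q + pd j (fun r => gmat F r i m) q
      - pd m (fun r => gmat F r i j) q)

/-- The Riemann curvature (0,4)-tensor: R(∂i,∂j,∂k,∂l) = g((∇_i∇_j - ∇_j∇_i)∂k, ∂l). -/
noncomputable def R4 {n : ℕ} (F : (Fin n → ℝ) → ℝ) (q : Pt n) (i j k l : Idx n) : ℝ :=
  ∑ m : Idx n, gmat F q l m *
    (pd i (fun r => Gamma2 F m j k r) q - pd j (fun r => Gamma2 F m i k r) q
      + ∑ a : Idx n, (Gamma2 F m i a q * Gamma2 F a j k q - Gamma2 F m j a q * Gamma2 F a i k q))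

/-- Covariant derivative of a (0,m)-tensor field; the new (differentiation) index
    is appended as the last slot. -/
noncomputable def covD {n m : ℕ} (F : (Fin n → ℝ) → ℝ) (T : Pt n → (Fin m → Idx n) → ℝ)
    (q : Pt n) (v : Fin (m+1) → Idx n) : ℝ :=
  pd (v (Fin.last m)) (fun r => T r (fun a => v a.castSucc)) q
    - ∑ a : Fin m, ∑ l : Idx n,
        Gamma2 F l (v (Fin.last m)) (v a.castSucc) q *
          T q (Function.update (fun b => v b.castSucc) a l)

/-- The k-th covariant derivative ∇^k R, a (0, k+4)-tensor field. -/
noncomputable def covDIter {n : ℕ} (F : (Fin n → ℝ) → ℝ) :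
    (k : ℕ) → Pt n → (Fin (k+4) → Idx n) → ℝ
  | 0 => fun q v => R4 F q (v 0) (v 1) (v 2) (v 3)
  | (k+1) => covD F (covDIter F k)


/-- Index of the variable z_i among the s-variables (s = (z_0..z_p, z̃_0..z̃_p)). -/
def zI (p : ℕ) (i : Fin (p+1)) : Fin (2+2*p) := ⟨i.val, by have := i.isLt; omega⟩
/-- Index of the variable z̃_i among the s-variables. -/
def ztI (p : ℕ) (i : Fin (p+1)) : Fin (2+2*p) := ⟨p+1+i.val, by have := i.isLt; omega⟩

/-- The function F = f(z_0,…,z_p) + z_0 z̃_0 + … + z_p z̃_p defining the metric of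
    M_{6+4p,f} via g(∂x,∂x) = -2F. -/
noncomputable def Ffull (p : ℕ) (f : (Fin (p+1) → ℝ) → ℝ) : (Fin (2+2*p) → ℝ) → ℝ :=
  fun s => f (fun i => s (zI p i)) + ∑ i : Fin (p+1), s (zI p i) * s (ztI p i)



section metric
variable {n : ℕ}

def iXs (n : ℕ) : Idx n := Sum.inr (Sum.inl ())
def iSs (n : ℕ) (i : Fin n) : Idx n := Sum.inr (Sum.inr i)

noncomputable def ginv (F : (Fin n → ℝ) → ℝ) (q : Pt n) : Matrix (Idx n) (Idx n) ℝ :=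
  fun a b => match a, b with
    | Sum.inl (Sum.inl _), Sum.inr (Sum.inl _) => 1
    | Sum.inr (Sum.inl _), Sum.inl (Sum.inl _) => 1
    | Sum.inr (Sum.inl _), Sum.inr (Sum.inl _) => 2 * F (sPart q)
    | Sum.inl (Sum.inr i), Sum.inr (Sum.inr j) => if i = j then 1 else 0
    | Sum.inr (Sum.inr i), Sum.inl (Sum.inr j) => if i = j then 1 else 0
    | _, _ => 0

lemma gmat_mul_ginv (F : (Fin n → ℝ) → ℝ) (q : Pt n) : gmat F q * ginv F q = 1 := by
  ext a b
  rw [Matrix.mul_apply]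
  rcases a with (⟨⟩|i)|(⟨⟩|i) <;> rcases b with (⟨⟩|j)|(⟨⟩|j) <;>
    simp [gmat, ginv, Fintype.sum_sum_type, Matrix.one_apply, Finset.sum_ite_eq,
      Finset.sum_ite_eq', eq_comm] <;> ring

lemma ginv_eq (F : (Fin n → ℝ) → ℝ) (q : Pt n) : (gmat F q)⁻¹ = ginv F q :=
  Matrix.inv_eq_right_inv (gmat_mul_ginv F q)

end metric

section christoffel
variable {n : ℕ} {F : (Fin n → ℝ) → ℝ}

lemma iS_injective (n : ℕ) : Function.Injective (iS n) := by
  intro a b h; simpa [iS] using h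

/-- directional derivative of `F ∘ sPart` along a coordinate index -/
noncomputable def dirS (F : (Fin n → ℝ) → ℝ) : Idx n → (Fin n → ℝ) → ℝ
  | Sum.inl (Sum.inr k) => pdS k F
  | _ => fun _ => 0

lemma pd_sPart {G : (Fin n → ℝ) → ℝ} (hG : Differentiable ℝ G) (a : Idx n) (q : Pt n) :
    pd a (fun r => G (sPart r)) q = dirS G a (sPart q) := by
  have hfun : (fun r : Pt n => G (sPart r)) = (fun r => G (projCLM (iS n) r)) := by
    funext r; congr 1
  have hsq : projCLM (iS n) q = sPart q := rfl
  rw [show pd a (fun r => G (sPart r)) q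
      = fderiv ℝ (fun r => G (projCLM (iS n) r)) q (Pi.single a 1) by rw [pd, hfun]]
  rw [pd_comp (iS n) hG q a]
  rcases a with (⟨⟩|k)|(⟨⟩|k)
  · rw [projCLM_single_not_mem (iS n) _ (fun k h => by simp [iS] at h)]
    simp [dirS]
  · rw [show (Sum.inl (Sum.inr k) : Idx n) = iS n k from rfl,
      projCLM_single_mem (iS n) (iS_injective n) k, hsq]
    rfl
  · rw [projCLM_single_not_mem (iS n) _ (fun k h => by simp [iS] at h)]
    simp [dirS]
  · rw [projCLM_single_not_mem (iS n) _ (fun k h => by simp [iS] at h)]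
    simp [dirS]

lemma diff_of_contDiff {G : (Fin n → ℝ) → ℝ} (hG : ContDiff ℝ ∞ G) : Differentiable ℝ G :=
  hG.differentiable (by norm_num)

lemma pd_gmat (hF : ContDiff ℝ ∞ F) (i j m : Idx n) (q : Pt n) :
    pd i (fun r => gmat F r j m) q =
      if j = iX n ∧ m = iX n then -2 * dirS F i (sPart q) else 0 := by
  have hd : Differentiable ℝ (fun r : Pt n => F (sPart r)) :=
    (diff_of_contDiff hF).comp (projCLM (iS n)).differentiable
  rcases j with (⟨⟩|j)|(⟨⟩|j) <;> rcases m with (⟨⟩|m)|(⟨⟩|m) <;>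
    simp only [gmat, pd, iX, reduceCtorEq, and_false, false_and, and_self, if_true, if_false,
      Sum.inl.injEq, Sum.inr.injEq] <;>
    try { rw [fderiv_fun_const]; simp }
  · -- the (X,X) entry
    rw [show (fun r : Pt n => -2 * F (sPart r)) = (fun r => (-2 : ℝ) * (fun r' => F (sPart r')) r) from rfl,
      fderiv_const_mul (hd q)]
    simp only [ContinuousLinearMap.coe_smul', Pi.smul_apply, smul_eq_mul]
    rw [show fderiv ℝ (fun r : Pt n => F (sPart r)) q (Pi.single i 1) = pd i (fun r => F (sPart r)) q from rfl,
       pd_sPart (diff_of_contDiff hF) i q]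

/-- Explicit Christoffel symbols -/
noncomputable def Gex (F : (Fin n → ℝ) → ℝ) : Idx n → Idx n → Idx n → (Fin n → ℝ) → ℝ
  | Sum.inr (Sum.inr k), Sum.inl (Sum.inl _), Sum.inl (Sum.inl _) => pdS k F
  | Sum.inr (Sum.inl _), Sum.inl (Sum.inl _), Sum.inl (Sum.inr k) => fun s => -(pdS k F s)
  | Sum.inr (Sum.inl _), Sum.inl (Sum.inr k), Sum.inl (Sum.inl _) => fun s => -(pdS k F s)
  | _, _, _ => fun _ => 0

lemma Gamma2_eq (hF : ContDiff ℝ ∞ F) (l i j : Idx n) (q : Pt n) :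
    Gamma2 F l i j q = Gex F l i j (sPart q) := by
  unfold Gamma2
  rw [ginv_eq]
  simp only [pd_gmat hF]
  rcases l with (⟨⟩|l)|(⟨⟩|l) <;> rcases i with (⟨⟩|i)|(⟨⟩|i) <;> rcases j with (⟨⟩|j)|(⟨⟩|j) <;>
    simp [Gex, ginv, dirS, iX, Fintype.sum_sum_type, Finset.sum_ite_eq, Finset.sum_ite_eq',
      mul_comm] <;> ring

end christoffel

section curvature
variable {n : ℕ} {F : (Fin n → ℝ) → ℝ}

lemma pdS_neg (u : Fin n) (g : (Fin n → ℝ) → ℝ) (s : Fin n → ℝ) :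
    pdS u (fun s' => -(g s')) s = -(pdS u g s) := by
  simp [pdS, fderiv_neg]

lemma pdS_zero (u : Fin n) (s : Fin n → ℝ) : pdS u (fun _ => (0:ℝ)) s = 0 := by
  simp [pdS]

lemma Gex_contDiff (hF : ContDiff ℝ ∞ F) (m j k : Idx n) : ContDiff ℝ ∞ (Gex F m j k) := by
  rcases m with (⟨⟩|m)|(⟨⟩|m) <;> rcases j with (⟨⟩|j)|(⟨⟩|j) <;> rcases k with (⟨⟩|k)|(⟨⟩|k) <;>
    simp only [Gex] <;>
    first
      | exact contDiff_pdg hF _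
      | exact (contDiff_pdg hF _).neg
      | exact contDiff_const

lemma pd_Gamma2 (hF : ContDiff ℝ ∞ F) (i m j k : Idx n) (q : Pt n) :
    pd i (fun r => Gamma2 F m j k r) q = dirS (Gex F m j k) i (sPart q) := by
  have hfun : (fun r => Gamma2 F m j k r) = (fun r => Gex F m j k (sPart r)) := by
    funext r; exact Gamma2_eq hF m j k r
  rw [hfun, pd_sPart (diff_of_contDiff (Gex_contDiff hF m j k)) i q]

/-- second partials -/
noncomputable def D2 (F : (Fin n → ℝ) → ℝ) (t u : Fin n) : (Fin n → ℝ) → ℝ := pdS u (pdS t F)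

/-- ∂_i Γ^m_{jk} explicit -/
noncomputable def DG (F : (Fin n → ℝ) → ℝ) : Idx n → Idx n → Idx n → Idx n → (Fin n → ℝ) → ℝ
  | Sum.inr (Sum.inr t), Sum.inl (Sum.inl _), Sum.inl (Sum.inl _), Sum.inl (Sum.inr u) => D2 F t u
  | Sum.inr (Sum.inl _), Sum.inl (Sum.inl _), Sum.inl (Sum.inr t), Sum.inl (Sum.inr u) =>
      fun s => -(D2 F t u s)
  | Sum.inr (Sum.inl _), Sum.inl (Sum.inr t), Sum.inl (Sum.inl _), Sum.inl (Sum.inr u) =>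
      fun s => -(D2 F t u s)
  | _, _, _, _ => fun _ => 0

lemma dirS_Gex (m j k i : Idx n) (s : Fin n → ℝ) :
    dirS (Gex F m j k) i s = DG F m j k i s := by
  rcases i with (⟨⟩|u)|(⟨⟩|u) <;> rcases m with (⟨⟩|m)|(⟨⟩|m) <;>
    rcases j with (⟨⟩|j)|(⟨⟩|j) <;> rcases k with (⟨⟩|k)|(⟨⟩|k) <;>
    simp [dirS, DG, Gex, D2, pdS_neg, pdS_zero]

lemma Gex_fst_inl (t : Unit ⊕ Fin n) (j k : Idx n) : Gex F (Sum.inl t) j k = fun _ => 0 := by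
  rcases t with ⟨⟩|t <;> rcases j with (⟨⟩|j)|(⟨⟩|j) <;> rcases k with (⟨⟩|k)|(⟨⟩|k) <;> rfl

lemma Gex_thd_inr (m i : Idx n) (t : Unit ⊕ Fin n) : Gex F m i (Sum.inr t) = fun _ => 0 := by
  rcases m with (⟨⟩|m)|(⟨⟩|m) <;> rcases i with (⟨⟩|i)|(⟨⟩|i) <;> rcases t with ⟨⟩|t <;> rfl

lemma Gex_quad (m i j k : Idx n) (s : Fin n → ℝ) :
    ∑ a : Idx n, (Gex F m i a s * Gex F a j k s - Gex F m j a s * Gex F a i k s) = 0 := by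
  apply Finset.sum_eq_zero
  intro a _
  rcases a with t|t
  · rw [Gex_fst_inl t j k, Gex_fst_inl t i k]; simp
  · rw [Gex_thd_inr m i t, Gex_thd_inr m j t]; simp

/-- Explicit curvature tensor -/
noncomputable def R4c (F : (Fin n → ℝ) → ℝ) : Idx n → Idx n → Idx n → Idx n → (Fin n → ℝ) → ℝ
  | Sum.inl (Sum.inr u), Sum.inl (Sum.inl _), Sum.inl (Sum.inl _), Sum.inl (Sum.inr t) => D2 F t u
  | Sum.inl (Sum.inl _), Sum.inl (Sum.inr u), Sum.inl (Sum.inl _), Sum.inl (Sum.inr t) =>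
      fun s => -(D2 F t u s)
  | Sum.inl (Sum.inr u), Sum.inl (Sum.inl _), Sum.inl (Sum.inr t), Sum.inl (Sum.inl _) =>
      fun s => -(D2 F t u s)
  | Sum.inl (Sum.inl _), Sum.inl (Sum.inr u), Sum.inl (Sum.inr t), Sum.inl (Sum.inl _) => D2 F t u
  | Sum.inl (Sum.inr u), Sum.inl (Sum.inr w), Sum.inl (Sum.inl _), Sum.inl (Sum.inl _) =>
      fun s => D2 F u w s - D2 F w u s
  | _, _, _, _ => fun _ => 0

lemma DG_fst_inl (t : Unit ⊕ Fin n) (j k i : Idx n) : DG F (Sum.inl t) j k i = fun _ => 0 := by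
  rcases t with ⟨⟩|t <;> rcases j with (⟨⟩|j)|(⟨⟩|j) <;> rcases k with (⟨⟩|k)|(⟨⟩|k) <;>
    rcases i with (⟨⟩|i)|(⟨⟩|i) <;> rfl

lemma sum_gmat (q : Pt n) (l : Idx n) (A : Idx n → ℝ) (hA : ∀ t, A (Sum.inl t) = 0) :
    ∑ m : Idx n, gmat F q l m * A m
      = (match l with
         | Sum.inl (Sum.inl _) => A (Sum.inr (Sum.inl ()))
         | Sum.inl (Sum.inr w) => A (Sum.inr (Sum.inr w))
         | _ => 0) := by
  rcases l with (⟨⟩|l)|(⟨⟩|l) <;>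
    simp [gmat, Fintype.sum_sum_type, hA, Finset.sum_ite_eq, Finset.sum_ite_eq']

lemma pd_Gex (hF : ContDiff ℝ ∞ F) (i m j k : Idx n) (q : Pt n) :
    pd i (fun r => Gex F m j k (sPart r)) q = DG F m j k i (sPart q) := by
  rw [pd_sPart (diff_of_contDiff (Gex_contDiff hF m j k)), dirS_Gex]

lemma R4_eq (hF : ContDiff ℝ ∞ F) (q : Pt n) (i j k l : Idx n) :
    R4 F q i j k l = R4c F i j k l (sPart q) := by
  unfold R4
  simp only [Gamma2_eq hF, Gex_quad, add_zero, pd_Gex hF]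
  rw [sum_gmat q l (fun m => DG F m j k i (sPart q) - DG F m i k j (sPart q))
      (fun t => by simp [DG_fst_inl])]
  rcases l with (⟨⟩|l)|(⟨⟩|l) <;> rcases i with (⟨⟩|i)|(⟨⟩|i) <;>
    rcases j with (⟨⟩|j)|(⟨⟩|j) <;> rcases k with (⟨⟩|k)|(⟨⟩|k) <;>
    simp [R4c, DG] <;> ring

end curvature

section covd
variable {n : ℕ} {F : (Fin n → ℝ) → ℝ}

lemma R4c_contDiff (hF : ContDiff ℝ ∞ F) (i j k l : Idx n) : ContDiff ℝ ∞ (R4c F i j k l) := by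
  have c2 : ∀ t u : Fin n, ContDiff ℝ ∞ (D2 F t u) := fun t u => contDiff_pdg (contDiff_pdg hF t) u
  rcases i with (⟨⟩|i)|(⟨⟩|i) <;> rcases j with (⟨⟩|j)|(⟨⟩|j) <;>
    rcases k with (⟨⟩|k)|(⟨⟩|k) <;> rcases l with (⟨⟩|l)|(⟨⟩|l) <;>
    simp only [R4c] <;>
    first
      | exact c2 _ _
      | exact (c2 _ _).neg
      | exact (c2 _ _).sub (c2 _ _)
      | exact contDiff_const

lemma R4c_inr1 (t : Unit ⊕ Fin n) (j k l : Idx n) : R4c F (Sum.inr t) j k l = fun _ => 0 := by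
  rcases t with ⟨⟩|t <;> rcases j with (⟨⟩|j)|(⟨⟩|j) <;> rcases k with (⟨⟩|k)|(⟨⟩|k) <;>
    rcases l with (⟨⟩|l)|(⟨⟩|l) <;> rfl

lemma R4c_inr2 (t : Unit ⊕ Fin n) (i k l : Idx n) : R4c F i (Sum.inr t) k l = fun _ => 0 := by
  rcases t with ⟨⟩|t <;> rcases i with (⟨⟩|i)|(⟨⟩|i) <;> rcases k with (⟨⟩|k)|(⟨⟩|k) <;>
    rcases l with (⟨⟩|l)|(⟨⟩|l) <;> rfl

lemma R4c_inr3 (t : Unit ⊕ Fin n) (i j l : Idx n) : R4c F i j (Sum.inr t) l = fun _ => 0 := by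
  rcases t with ⟨⟩|t <;> rcases i with (⟨⟩|i)|(⟨⟩|i) <;> rcases j with (⟨⟩|j)|(⟨⟩|j) <;>
    rcases l with (⟨⟩|l)|(⟨⟩|l) <;> rfl

lemma R4c_inr4 (t : Unit ⊕ Fin n) (i j k : Idx n) : R4c F i j k (Sum.inr t) = fun _ => 0 := by
  rcases t with ⟨⟩|t <;> rcases i with (⟨⟩|i)|(⟨⟩|i) <;> rcases j with (⟨⟩|j)|(⟨⟩|j) <;>
    rcases k with (⟨⟩|k)|(⟨⟩|k) <;> rfl

lemma corr_zero (hF : ContDiff ℝ ∞ F) (q : Pt n) (d e : Idx n) (w : Fin 4 → Idx n) (a : Fin 4) :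
    ∑ l : Idx n, Gamma2 F l d e q * covDIter F 0 q (Function.update w a l) = 0 := by
  apply Finset.sum_eq_zero
  intro l _
  rcases l with t|t
  · rw [Gamma2_eq hF, Gex_fst_inl]; simp
  · have hz : covDIter F 0 q (Function.update w a (Sum.inr t)) = 0 := by
      show R4 F q _ _ _ _ = 0
      rw [R4_eq hF]
      fin_cases a <;>
        simp [Function.update_apply, R4c_inr1, R4c_inr2, R4c_inr3, R4c_inr4]
    rw [hz, mul_zero]

lemma covD1_eq (hF : ContDiff ℝ ∞ F) (q : Pt n) (v : Fin (1+4) → Idx n) :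
    covDIter F 1 q v = dirS (R4c F (v 0) (v 1) (v 2) (v 3)) (v 4) (sPart q) := by
  show covD F (covDIter F 0) q v = _
  unfold covD
  have hfun : (fun r => covDIter F 0 r (fun a => v a.castSucc))
      = fun r => R4c F (v 0) (v 1) (v 2) (v 3) (sPart r) := by
    funext r
    show R4 F r (v 0) (v 1) (v 2) (v 3) = _
    exact R4_eq hF r _ _ _ _
  rw [hfun]
  have hlast : v (Fin.last 4) = v 4 := rfl
  rw [show pd (v (Fin.last 4)) (fun r => R4c F (v 0) (v 1) (v 2) (v 3) (sPart r)) q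
      = dirS (R4c F (v 0) (v 1) (v 2) (v 3)) (v 4) (sPart q) by
    rw [hlast, pd_sPart (diff_of_contDiff (R4c_contDiff hF _ _ _ _))]]
  rw [show ∀ x : ℝ, x - ∑ a : Fin 4, ∑ l : Idx n,
        Gamma2 F l (v (Fin.last 4)) (v a.castSucc) q *
          covDIter F 0 q (Function.update (fun b => v b.castSucc) a l) = x - 0 by
    intro x; congr 1; exact Finset.sum_eq_zero fun a _ => corr_zero hF q _ _ _ a]
  rw [sub_zero]

end covd

section toolkit
variable {N : ℕ}

lemma pdS_const (k : Fin N) (c : ℝ) (s : Fin N → ℝ) : pdS k (fun _ => c) s = 0 := by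
  simp [pdS]

lemma pdS_proj (k t : Fin N) (s : Fin N → ℝ) :
    pdS k (fun s' => s' t) s = if t = k then 1 else 0 := by
  rw [show pdS k (fun s' => s' t) s
      = fderiv ℝ (ContinuousLinearMap.proj (R := ℝ) (φ := fun _ : Fin N => ℝ) t) s (Pi.single k 1)
      from rfl, ContinuousLinearMap.fderiv]
  simp [Pi.single_apply]

lemma diff_proj (t : Fin N) : Differentiable ℝ (fun s' : Fin N → ℝ => s' t) :=
  (ContinuousLinearMap.proj (R := ℝ) (φ := fun _ : Fin N => ℝ) t).differentiable

lemma pdS_add {g h : (Fin N → ℝ) → ℝ} (hg : DifferentiableAt ℝ g s) (hh : DifferentiableAt ℝ h s)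
    (k : Fin N) : pdS k (fun s' => g s' + h s') s = pdS k g s + pdS k h s := by
  simp [pdS, fderiv_fun_add hg hh]

lemma pdS_sub {g h : (Fin N → ℝ) → ℝ} (hg : DifferentiableAt ℝ g s) (hh : DifferentiableAt ℝ h s)
    (k : Fin N) : pdS k (fun s' => g s' - h s') s = pdS k g s - pdS k h s := by
  simp [pdS, fderiv_fun_sub hg hh]

lemma pdS_sum {α : Type*} (A : Finset α) {g : α → (Fin N → ℝ) → ℝ} (s : Fin N → ℝ)
    (hg : ∀ a ∈ A, DifferentiableAt ℝ (g a) s) (k : Fin N) :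
    pdS k (fun s' => ∑ a ∈ A, g a s') s = ∑ a ∈ A, pdS k (g a) s := by
  simp [pdS, fderiv_fun_sum hg]

lemma pdS_const_mul {g : (Fin N → ℝ) → ℝ} (hg : DifferentiableAt ℝ g s) (c : ℝ) (k : Fin N) :
    pdS k (fun s' => c * g s') s = c * pdS k g s := by
  simp [pdS, fderiv_const_mul hg]

lemma pdS_mul {g h : (Fin N → ℝ) → ℝ} (hg : DifferentiableAt ℝ g s) (hh : DifferentiableAt ℝ h s)
    (k : Fin N) : pdS k (fun s' => g s' * h s') s = g s * pdS k h s + h s * pdS k g s := by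
  simp [pdS, fderiv_fun_mul hg hh]

/-- generic quadratic polynomial -/
noncomputable def QP (a0 : ℝ) (lv : Fin N → ℝ) (mv : Fin N → Fin N → ℝ) :
    (Fin N → ℝ) → ℝ :=
  fun s => a0 + (∑ t, lv t * s t) + ∑ t, ∑ u, mv t u * (s t * s u)

lemma diff_QP_pieces (a0 : ℝ) (lv : Fin N → ℝ) (mv : Fin N → Fin N → ℝ) :
    Differentiable ℝ (QP a0 lv mv) := by
  apply Differentiable.add
  apply Differentiable.add
  · exact differentiable_const a0
  · exact Differentiable.fun_sum fun t _ => (diff_proj t).const_mul (lv t)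
  · exact Differentiable.fun_sum fun t _ => Differentiable.fun_sum fun u _ =>
      (((diff_proj t).mul (diff_proj u)).const_mul (mv t u))

lemma QP1 (a0 : ℝ) (lv : Fin N → ℝ) (mv : Fin N → Fin N → ℝ) (k : Fin N) (s : Fin N → ℝ) :
    pdS k (QP a0 lv mv) s = lv k + ((∑ u, mv k u * s u) + ∑ t, mv t k * s t) := by
  unfold QP
  rw [pdS_add (by fun_prop) (by fun_prop), pdS_add (by fun_prop) (by fun_prop), pdS_const,
    pdS_sum _ s (fun a _ => by fun_prop), pdS_sum _ s (fun a _ => by fun_prop)]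
  have h1 : ∀ t, pdS k (fun s' => lv t * s' t) s = lv t * if t = k then 1 else 0 := by
    intro t; rw [pdS_const_mul (by fun_prop), pdS_proj]
  have h2 : ∀ t, pdS k (fun s' => ∑ u, mv t u * (s' t * s' u)) s
      = ∑ u, mv t u * (s t * (if u = k then 1 else 0) + s u * (if t = k then 1 else 0)) := by
    intro t
    rw [pdS_sum _ s (fun a _ => by fun_prop)]
    refine Finset.sum_congr rfl fun u _ => ?_
    rw [pdS_const_mul (by fun_prop), pdS_mul (by fun_prop) (by fun_prop), pdS_proj, pdS_proj]
  simp only [h1, h2]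
  simp [mul_ite, ite_mul, mul_add, mul_one, mul_zero, Finset.sum_add_distrib,
    Finset.sum_ite_irrel, Finset.sum_ite_eq', mul_comm]
  ring

lemma D2_QP (a0 : ℝ) (lv : Fin N → ℝ) (mv : Fin N → Fin N → ℝ) (t u : Fin N) :
    D2 (QP a0 lv mv) t u = fun _ => mv t u + mv u t := by
  funext s
  show pdS u (pdS t (QP a0 lv mv)) s = _
  have hfun : pdS t (QP a0 lv mv)
      = fun s' => lv t + ((∑ b, mv t b * s' b) + ∑ a, mv a t * s' a) :=
    funext fun s' => QP1 a0 lv mv t s'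
  rw [hfun, pdS_add (by fun_prop) (by fun_prop), pdS_const,
    pdS_add (by fun_prop) (by fun_prop),
    pdS_sum _ s (fun a _ => by fun_prop), pdS_sum _ s (fun a _ => by fun_prop)]
  have h1 : ∀ b, pdS u (fun s' => mv t b * s' b) s = mv t b * if b = u then 1 else 0 := by
    intro b; rw [pdS_const_mul (by fun_prop), pdS_proj]
  have h2 : ∀ a, pdS u (fun s' => mv a t * s' a) s = mv a t * if a = u then 1 else 0 := by
    intro a; rw [pdS_const_mul (by fun_prop), pdS_proj]
  simp [h1, h2, mul_ite, Finset.sum_ite_eq']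

end toolkit

section analysis
variable {N : ℕ}

lemma pdS_linear (A : Fin N → ℝ) (k : Fin N) (x : Fin N → ℝ) :
    pdS k (fun z => ∑ b, A b * z b) x = A k := by
  rw [pdS_sum _ x (fun b _ => by fun_prop)]
  have h1 : ∀ b, pdS k (fun z : Fin N → ℝ => A b * z b) x = A b * if b = k then 1 else 0 :=
    fun b => by rw [pdS_const_mul (by fun_prop), pdS_proj]
  simp [h1, mul_ite, Finset.sum_ite_eq']

lemma fderiv_eq_zero_of_pdS {g : (Fin N → ℝ) → ℝ} (h : ∀ k x, pdS k g x = 0) (x : Fin N → ℝ) :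
    fderiv ℝ g x = 0 := by
  ext v
  show fderiv ℝ g x v = 0
  have hv : v = ∑ i, v i • (Pi.single i (1:ℝ) : Fin N → ℝ) := by
    conv_lhs => rw [pi_eq_sum_univ v]
    refine Finset.sum_congr rfl fun i _ => ?_
    congr 1
    funext j
    simp [Pi.single_apply, eq_comm]
  rw [hv, map_sum]
  simp only [map_smul]
  have h' : ∀ i, fderiv ℝ g x (Pi.single i 1) = 0 := fun i => h i x
  simp [h']

lemma const_of_pdS_zero {g : (Fin N → ℝ) → ℝ} (hg : Differentiable ℝ g)
    (h : ∀ k x, pdS k g x = 0) (x y : Fin N → ℝ) : g x = g y :=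
  is_const_of_fderiv_eq_zero hg (fderiv_eq_zero_of_pdS h) x y

lemma pdS_symm {f : (Fin N → ℝ) → ℝ} (hf : ContDiff ℝ ∞ f) (a b : Fin N) (x : Fin N → ℝ) :
    pdS b (pdS a f) x = pdS a (pdS b f) x := by
  have h' : ∀ y, HasFDerivAt f (fderiv ℝ f y) y := fun y =>
    (hf.differentiable (by norm_num) y).hasFDerivAt
  have hfd : ContDiff ℝ ∞ (fderiv ℝ f) := hf.fderiv_right (le_refl _)
  have hd2 : DifferentiableAt ℝ (fderiv ℝ f) x := (hfd.differentiable (by norm_num)) x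
  have h'' : HasFDerivAt (fderiv ℝ f) (fderiv ℝ (fderiv ℝ f) x) x := hd2.hasFDerivAt
  have key := second_derivative_symmetric h' h''
  have heval : ∀ c d : Fin N, pdS d (pdS c f) x
      = (fderiv ℝ (fderiv ℝ f) x) (Pi.single d 1) (Pi.single c 1) := by
    intro c d
    have comp : HasFDerivAt (⇑(ContinuousLinearMap.apply ℝ ℝ (Pi.single c (1:ℝ))) ∘ (fderiv ℝ f))
        ((ContinuousLinearMap.apply ℝ ℝ (Pi.single c (1:ℝ))).comp (fderiv ℝ (fderiv ℝ f) x)) x :=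
      ((ContinuousLinearMap.apply ℝ ℝ (Pi.single c (1:ℝ)) : ((Fin N → ℝ) →L[ℝ] ℝ) →L[ℝ] ℝ).hasFDerivAt).comp x h''
    show fderiv ℝ (⇑(ContinuousLinearMap.apply ℝ ℝ (Pi.single c (1:ℝ))) ∘ (fderiv ℝ f)) x
        (Pi.single d 1) = _
    rw [comp.fderiv]; rfl
  rw [heval a b, heval b a, key]

lemma quadratic_of_pd3_zero {f : (Fin N → ℝ) → ℝ} (hf : ContDiff ℝ ∞ f)
    (h3 : ∀ (a b c : Fin N) (z : Fin N → ℝ), pdS c (pdS b (pdS a f)) z = 0) (z : Fin N → ℝ) :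
    f z = f 0 + (∑ i, pdS i f 0 * z i)
        + ∑ i, ∑ j, (pdS j (pdS i f) 0 / 2) * z i * z j := by
  have hd1 : ∀ a, Differentiable ℝ (pdS a f) := fun a =>
    (contDiff_pdg hf a).differentiable (by norm_num)
  have hc2 : ∀ a b, ContDiff ℝ ∞ (pdS b (pdS a f)) := fun a b =>
    contDiff_pdg (contDiff_pdg hf a) b
  have hd2 : ∀ a b, Differentiable ℝ (pdS b (pdS a f)) := fun a b =>
    (hc2 a b).differentiable (by norm_num)
  set H := fun a b => pdS b (pdS a f) 0 with hH
  have hHconst : ∀ a b z, pdS b (pdS a f) z = H a b := fun a b z =>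
    const_of_pdS_zero (hd2 a b) (fun c x => h3 a b c x) z 0
  have hHsymm : ∀ a b, H a b = H b a := fun a b => pdS_symm hf a b 0
  -- first derivatives are affine
  have hG : ∀ a z, pdS a f z = pdS a f 0 + ∑ b, H a b * z b := by
    intro a z
    have hφd : Differentiable ℝ (fun z => pdS a f z - ∑ b, H a b * z b) :=
      (hd1 a).sub (Differentiable.fun_sum fun b _ => (diff_proj b).const_mul _)
    have hφ : ∀ k x, pdS k (fun z => pdS a f z - ∑ b, H a b * z b) x = 0 := by
      intro k x
      rw [pdS_sub ((hd1 a) x) (by fun_prop), hHconst a k x, pdS_linear]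
      ring
    have hcc := const_of_pdS_zero hφd hφ z 0
    simp only [Pi.zero_apply, mul_zero, Finset.sum_const_zero, sub_zero] at hcc
    linarith [hcc]
  -- f equals the quadratic polynomial
  have hψd : Differentiable ℝ (fun z => f z - QP (f 0) (fun a => pdS a f 0) (fun a b => H a b / 2) z) :=
    (hf.differentiable (by norm_num)).sub (diff_QP_pieces _ _ _)
  have hψ : ∀ k x, pdS k (fun z => f z - QP (f 0) (fun a => pdS a f 0) (fun a b => H a b / 2) z) x = 0 := by
    intro k x
    rw [pdS_sub ((hf.differentiable (by norm_num)) x) ((diff_QP_pieces _ _ _) x), QP1, hG k x]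
    have e1 : ∀ a, H a k = H k a := fun a => hHsymm a k
    simp only [e1]
    rw [← Finset.sum_add_distrib]
    have e2 : ∀ b, H k b / 2 * x b + H k b / 2 * x b = H k b * x b := fun b => by ring
    simp only [e2]
    ring
  have hcc := const_of_pdS_zero hψd hψ z 0
  have hq0 : QP (f 0) (fun a => pdS a f 0) (fun a b => H a b / 2) 0 = f 0 := by
    simp [QP]
  rw [hq0] at hcc
  simp only [sub_self] at hcc
  have hfz : f z = QP (f 0) (fun a => pdS a f 0) (fun a b => H a b / 2) z := by linarith [hcc]
  rw [hfz]
  simp only [QP, hH]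
  congr 1
  exact Finset.sum_congr rfl fun i _ => Finset.sum_congr rfl fun j _ => by ring

end analysis

section ffull
variable {p : ℕ} {f : (Fin (p+1) → ℝ) → ℝ}

lemma zI_inj : Function.Injective (zI p) := by
  intro a b h
  apply Fin.ext
  simpa [zI] using congrArg Fin.val h

lemma ztI_inj : Function.Injective (ztI p) := by
  intro a b h
  have := congrArg Fin.val h
  simp only [ztI] at this
  exact Fin.ext (by omega)

lemma zI_ne_ztI (i j : Fin (p+1)) : zI p i ≠ ztI p j := by
  simp only [ne_eq, Fin.ext_iff, zI, ztI]
  omega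

lemma zSplit (t : Fin (2+2*p)) : (∃ a, t = zI p a) ∨ (∃ a, t = ztI p a) := by
  by_cases h : (t : ℕ) < p + 1
  · exact Or.inl ⟨⟨t, h⟩, Fin.ext rfl⟩
  · refine Or.inr ⟨⟨(t : ℕ) - (p+1), by have := t.isLt; omega⟩, Fin.ext ?_⟩
    simp only [ztI]
    have := t.isLt
    omega

lemma Ffull_split : Ffull p f
    = fun s => f (projCLM (zI p) s) + ∑ i, s (zI p i) * s (ztI p i) := by
  funext s
  unfold Ffull
  congr 1

lemma Ffull_contDiff (hfs : ContDiff ℝ ∞ f) : ContDiff ℝ ∞ (Ffull p f) := by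
  rw [Ffull_split]
  refine ContDiff.add (hfs.comp (projCLM (zI p)).contDiff) (ContDiff.sum fun i _ => ?_)
  exact ContDiff.mul
    ((ContinuousLinearMap.proj (R := ℝ) (φ := fun _ : Fin (2+2*p) => ℝ) (zI p i)).contDiff)
    ((ContinuousLinearMap.proj (R := ℝ) (φ := fun _ : Fin (2+2*p) => ℝ) (ztI p i)).contDiff)

lemma pdS_comp_zI {G : (Fin (p+1) → ℝ) → ℝ} (hG : Differentiable ℝ G)
    (s : Fin (2+2*p) → ℝ) (a : Fin (p+1)) :
    pdS (zI p a) (fun s' => G (projCLM (zI p) s')) s = pdS a G (projCLM (zI p) s) := by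
  show fderiv ℝ (fun s' => G (projCLM (zI p) s')) s (Pi.single (zI p a) 1) = _
  rw [pd_comp (zI p) hG s (zI p a), projCLM_single_mem (zI p) zI_inj a]
  rfl

lemma pdS_comp_zI_skew {G : (Fin (p+1) → ℝ) → ℝ} (hG : Differentiable ℝ G)
    (s : Fin (2+2*p) → ℝ) (t : Fin (2+2*p)) (ht : ∀ k, zI p k ≠ t) :
    pdS t (fun s' => G (projCLM (zI p) s')) s = 0 := by
  show fderiv ℝ (fun s' => G (projCLM (zI p) s')) s (Pi.single t 1) = _
  rw [pd_comp (zI p) hG s t, projCLM_single_not_mem (zI p) t ht, map_zero]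

lemma diff_f_comp (hfs : ContDiff ℝ ∞ f) :
    Differentiable ℝ (fun s : Fin (2+2*p) → ℝ => f (projCLM (zI p) s)) :=
  (hfs.differentiable (by norm_num)).comp (projCLM (zI p)).differentiable

lemma diff_bilin : Differentiable ℝ
    (fun s : Fin (2+2*p) → ℝ => ∑ i, s (zI p i) * s (ztI p i)) :=
  Differentiable.fun_sum fun i _ => (diff_proj (zI p i)).mul (diff_proj (ztI p i))

/-- first partial of Ffull in a z-direction -/
lemma P1z (hfs : ContDiff ℝ ∞ f) (a : Fin (p+1)) (s : Fin (2+2*p) → ℝ) :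
    pdS (zI p a) (Ffull p f) s = pdS a f (projCLM (zI p) s) + s (ztI p a) := by
  rw [Ffull_split, pdS_add ((diff_f_comp hfs) s) (diff_bilin s),
    pdS_comp_zI (hfs.differentiable (by norm_num)),
    pdS_sum _ s (fun i _ => by fun_prop)]
  congr 1
  have h1 : ∀ i, pdS (zI p a) (fun s' : Fin (2+2*p) → ℝ => s' (zI p i) * s' (ztI p i)) s
      = s (zI p i) * (if ztI p i = zI p a then 1 else 0)
        + s (ztI p i) * (if zI p i = zI p a then 1 else 0) := fun i => by
    rw [pdS_mul (by fun_prop) (by fun_prop), pdS_proj, pdS_proj]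
  simp only [h1]
  have h2 : ∀ i, (ztI p i = zI p a) = False := fun i => by
    simp [(zI_ne_ztI a i).symm]
  simp [h2, zI_inj.eq_iff, mul_ite, Finset.sum_ite_eq']

/-- first partial of Ffull in a z̃-direction -/
lemma P1zt (hfs : ContDiff ℝ ∞ f) (a : Fin (p+1)) (s : Fin (2+2*p) → ℝ) :
    pdS (ztI p a) (Ffull p f) s = s (zI p a) := by
  rw [Ffull_split, pdS_add ((diff_f_comp hfs) s) (diff_bilin s),
    pdS_comp_zI_skew (hfs.differentiable (by norm_num)) s (ztI p a) (fun k => zI_ne_ztI k a),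
    pdS_sum _ s (fun i _ => by fun_prop), zero_add]
  have h1 : ∀ i, pdS (ztI p a) (fun s' : Fin (2+2*p) → ℝ => s' (zI p i) * s' (ztI p i)) s
      = s (zI p i) * (if ztI p i = ztI p a then 1 else 0)
        + s (ztI p i) * (if zI p i = ztI p a then 1 else 0) := fun i => by
    rw [pdS_mul (by fun_prop) (by fun_prop), pdS_proj, pdS_proj]
  simp only [h1]
  have h2 : ∀ i, (zI p i = ztI p a) = False := fun i => by simp [zI_ne_ztI i a]
  simp [h2, ztI_inj.eq_iff, mul_ite, Finset.sum_ite_eq']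

/-- second partial of Ffull in two z-directions -/
lemma D2_Ffull_zz (hfs : ContDiff ℝ ∞ f) (a b : Fin (p+1)) :
    D2 (Ffull p f) (zI p a) (zI p b)
      = fun s => pdS b (pdS a f) (projCLM (zI p) s) := by
  funext s
  show pdS (zI p b) (pdS (zI p a) (Ffull p f)) s = _
  have hfun : pdS (zI p a) (Ffull p f)
      = fun s' => pdS a f (projCLM (zI p) s') + s' (ztI p a) := funext fun s' => P1z hfs a s'
  rw [hfun]
  have hda : Differentiable ℝ (pdS a f) := (contDiff_pdg hfs a).differentiable (by norm_num)
  have hcomp : Differentiable ℝ (fun s' => pdS a f (projCLM (zI p) s')) :=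
    hda.comp (projCLM (zI p)).differentiable
  rw [pdS_add (hcomp s) ((diff_proj (ztI p a)) s), pdS_comp_zI hda, pdS_proj]
  simp [(zI_ne_ztI b a).symm]

/-- point of Pt with prescribed sPart -/
def qOf {n : ℕ} (s : Fin n → ℝ) : Pt n := fun a =>
  match a with
  | Sum.inl (Sum.inr i) => s i
  | _ => 0

lemma sPart_qOf {n : ℕ} (s : Fin n → ℝ) : sPart (qOf s) = s := rfl

/-- lift of a z-point to an s-point -/
def sOf (p : ℕ) (z : Fin (p+1) → ℝ) : Fin (2+2*p) → ℝ := fun t =>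
  if h : (t : ℕ) < p + 1 then z ⟨t, h⟩ else 0

lemma proj_sOf (p : ℕ) (z : Fin (p+1) → ℝ) : projCLM (zI p) (sOf p z) = z := by
  funext i
  have : ((zI p i : Fin (2+2*p)) : ℕ) < p + 1 := i.isLt
  simp [sOf, zI, this, i.isLt]

end ffull

section final
variable {p : ℕ} {f : (Fin (p+1) → ℝ) → ℝ}

lemma D2_Ffull_const (hfs : ContDiff ℝ ∞ f) {c0 : ℝ} {c1 : Fin (p+1) → ℝ}
    {c2 : Fin (p+1) → Fin (p+1) → ℝ} (hQP : f = QP c0 c1 c2) (t u : Fin (2+2*p)) :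
    ∃ c, ∀ s, D2 (Ffull p f) t u s = c := by
  rcases zSplit t with ⟨a, rfl⟩ | ⟨a, rfl⟩
  · rcases zSplit u with ⟨b, rfl⟩ | ⟨b, rfl⟩
    · refine ⟨c2 a b + c2 b a, fun s => ?_⟩
      rw [show D2 (Ffull p f) (zI p a) (zI p b) s = pdS b (pdS a f) (projCLM (zI p) s) from
        congrFun (D2_Ffull_zz hfs a b) s]
      have : D2 f a b = fun _ => c2 a b + c2 b a := by rw [hQP, D2_QP]
      exact congrFun this _
    · refine ⟨if a = b then 1 else 0, fun s => ?_⟩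
      show pdS (ztI p b) (pdS (zI p a) (Ffull p f)) s = _
      rw [show pdS (zI p a) (Ffull p f) = fun s' => pdS a f (projCLM (zI p) s') + s' (ztI p a)
        from funext (P1z hfs a)]
      have hda : Differentiable ℝ (pdS a f) := (contDiff_pdg hfs a).differentiable (by norm_num)
      have hcomp : Differentiable ℝ (fun s' => pdS a f (projCLM (zI p) s')) :=
        hda.comp (projCLM (zI p)).differentiable
      rw [pdS_add (hcomp s) ((diff_proj (ztI p a)) s),
        pdS_comp_zI_skew hda s (ztI p b) (fun k => zI_ne_ztI k b), pdS_proj, zero_add]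
      simp [ztI_inj.eq_iff]
  · refine ⟨if zI p a = u then 1 else 0, fun s => ?_⟩
    show pdS u (pdS (ztI p a) (Ffull p f)) s = _
    rw [show pdS (ztI p a) (Ffull p f) = fun s' => s' (zI p a) from funext (P1zt hfs a), pdS_proj]

lemma dirS_R4c_zero {n : ℕ} {F : (Fin n → ℝ) → ℝ}
    (hconst : ∀ t u, ∃ c, ∀ s, D2 F t u s = c) (i j k l d : Idx n) (s : Fin n → ℝ) :
    dirS (R4c F i j k l) d s = 0 := by
  have hc2 : ∀ (t u : Fin n) (s1 s2 : Fin n → ℝ), D2 F t u s1 = D2 F t u s2 := by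
    intro t u s1 s2; obtain ⟨c, hc⟩ := hconst t u; rw [hc, hc]
  have hRconst : R4c F i j k l = fun _ => R4c F i j k l 0 := by
    funext s'
    rcases i with (⟨⟩|i)|(⟨⟩|i) <;> rcases j with (⟨⟩|j)|(⟨⟩|j) <;>
      rcases k with (⟨⟩|k)|(⟨⟩|k) <;> rcases l with (⟨⟩|l)|(⟨⟩|l) <;>
      simp only [R4c] <;> (try simp only [hc2 _ _ s' 0]) <;> rfl
  rcases d with (⟨⟩|w)|(⟨⟩|w)
  · rfl
  · show pdS w (R4c F i j k l) s = 0
    rw [hRconst, pdS_const]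
  · rfl
  · rfl

end final

/-- M_{6+4p,f} is locally symmetric (∇R = 0) iff f is a polynomial of
    degree at most 2. -/
theorem stmt_3 (p : ℕ) (f : (Fin (p+1) → ℝ) → ℝ) (hf : ContDiff ℝ (⊤ : ℕ∞) f) :
    (∀ (q : Pt (2+2*p)) (v : Fin (1+4) → Idx (2+2*p)), covDIter (Ffull p f) 1 q v = 0)
    ↔ ∃ (c0 : ℝ) (c1 : Fin (p+1) → ℝ) (c2 : Fin (p+1) → Fin (p+1) → ℝ),
        ∀ z : Fin (p+1) → ℝ,
          f z = c0 + (∑ i, c1 i * z i) + ∑ i, ∑ j, c2 i j * z i * z j := by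
  have hfs : ContDiff ℝ ∞ f := hf.of_le (by simp)
  have hF : ContDiff ℝ ∞ (Ffull p f) := Ffull_contDiff hfs
  constructor
  · intro h
    have hzero : ∀ (t u w : Fin (2+2*p)) (s : Fin (2+2*p) → ℝ),
        pdS w (D2 (Ffull p f) t u) s = 0 := by
      intro t u w s
      have hq := h (qOf s) ![iS _ u, iX _, iX _, iS _ t, iS _ w]
      rw [covD1_eq hF] at hq
      exact hq
    have h3 : ∀ (a b c : Fin (p+1)) (z : Fin (p+1) → ℝ), pdS c (pdS b (pdS a f)) z = 0 := by
      intro a b c z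
      have key := hzero (zI p a) (zI p b) (zI p c) (sOf p z)
      rw [D2_Ffull_zz hfs a b] at key
      have hdab : Differentiable ℝ (pdS b (pdS a f)) :=
        (contDiff_pdg (contDiff_pdg hfs a) b).differentiable (by norm_num)
      rw [pdS_comp_zI hdab (sOf p z) c, proj_sOf p z] at key
      exact key
    exact ⟨f 0, fun i => pdS i f 0, fun i j => pdS j (pdS i f) 0 / 2,
      fun z => quadratic_of_pd3_zero hfs h3 z⟩
  · intro h q v
    obtain ⟨c0, c1, c2, hrep⟩ := h
    rw [covD1_eq hF q v]
    have hQP : f = QP c0 c1 c2 := funext fun z => by rw [hrep z]; simp [QP, mul_assoc]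
    exact dirS_R4c_zero (D2_Ffull_const hfs hQP) _ _ _ _ _ _
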